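/- Let {ψᵢ¹ ⊗ ψᵢ² : i = 1…d} be an orthonormal product basis of ℂ^{d₁} ⊗ ℂ^{d₂}, d = d₁d₂, and let μ¹ ∈ ℂ^{d₁}, μ² ∈ ℂ^{d₂} be unit vectors. Then the product state μ¹ ⊗ μ² is mutually unbiased to the basis (i.e. |⟨ψᵢ¹ ⊗ ψᵢ², μ¹ ⊗ μ²⟩|² = 1/d for all i = 1…d) if and only if |⟨ψᵢ¹, μ¹⟩|² = 1/d₁ and |⟨ψᵢ², μ²⟩|² = 1/d₂ for all i = 1…d. -/

import Mathlib

/-!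
Write `xᵢ = |⟨ψᵢ¹, μ¹⟩|²` and `yᵢ = |⟨ψᵢ², μ²⟩|²`, so that the overlap with the product state is
`xᵢ yᵢ`. Parseval's identity for the product basis, applied to `μ¹ ⊗ eⱼ` and summed over a basis
`(eⱼ)` of `ℂ^{d₂}`, gives `∑ xᵢ = d₂`; symmetrically `∑ yᵢ = d₁`. If `xᵢ yᵢ = 1/d` for all `i`,
then `aᵢ = d₁ xᵢ` and `bᵢ = d₂ yᵢ` satisfy `aᵢ bᵢ = 1` and `∑ (aᵢ + bᵢ) = 2d`, while AM-GM gives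
`aᵢ + bᵢ ≥ 2` for each of the `d` indices; so equality holds throughout, forcing `aᵢ = bᵢ = 1`.
-/

open scoped ComplexInnerProductSpace

noncomputable def eprod {ι γ : Type*} (a : EuclideanSpace ℂ ι) (b : EuclideanSpace ℂ γ) :
    EuclideanSpace ℂ (ι × γ) :=
  WithLp.toLp 2 (fun (p : ι × γ) => a p.1 * b p.2)

open Finset

theorem forall_eq_one_of_mul_eq_one_of_sum_add_le {ι : Type*} [Fintype ι] {a b : ι → ℝ}
    (ha : ∀ i, 0 ≤ a i) (hab : ∀ i, a i * b i = 1)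
    (hsum : ∑ i, (a i + b i) ≤ 2 * Fintype.card ι) (i : ι) : a i = 1 ∧ b i = 1 := by
  have hpos : ∀ i, 0 < a i := fun i ↦
    (ha i).lt_of_ne fun h ↦ by simpa [← h] using hab i
  have hsq : ∀ i, (a i + b i - 2) * a i = (a i - 1) ^ 2 := fun i ↦ by
    linear_combination hab i
  have hge : ∀ i ∈ univ, 2 ≤ a i + b i := fun i _ ↦ by
    nlinarith [hsq i, hpos i, sq_nonneg (a i - 1)]
  have htwo : a i + b i = 2 := by
    refine ((sum_eq_sum_iff_of_le hge).1 (le_antisymm (sum_le_sum hge) ?_) i (mem_univ i)).symm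
    simpa [mul_comm] using hsum
  have ha1 : a i = 1 := by nlinarith [hsq i]
  exact ⟨ha1, by linarith⟩

theorem Orthonormal.sum_sq_norm_inner_right_of_card_eq_finrank {𝕜 E ι : Type*} [RCLike 𝕜]
    [NormedAddCommGroup E] [InnerProductSpace 𝕜 E] [FiniteDimensional 𝕜 E] [Fintype ι]
    {v : ι → E} (hv : Orthonormal 𝕜 v) (hcard : Fintype.card ι = Module.finrank 𝕜 E) (x : E) :
    ∑ i, ‖inner 𝕜 (v i) x‖ ^ 2 = ‖x‖ ^ 2 := by
  have hspan := (hv.linearIndependent.span_eq_top_of_card_eq_finrank' hcard).ge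
  simpa only [OrthonormalBasis.coe_mk] using
    (OrthonormalBasis.mk hv hspan).sum_sq_norm_inner_right x

section eprod

variable {α β : Type*} [Fintype α] [Fintype β]

theorem inner_eprod_eprod (a c : EuclideanSpace ℂ α) (b d : EuclideanSpace ℂ β) :
    ⟪eprod a b, eprod c d⟫ = ⟪a, c⟫ * ⟪b, d⟫ := by
  simp only [PiLp.inner_apply, RCLike.inner_apply, eprod, Fintype.sum_prod_type, sum_mul_sum]
  refine sum_congr rfl fun i _ ↦ sum_congr rfl fun j _ ↦ ?_
  simp only [map_mul]
  ring

theorem norm_eprod_sq (a : EuclideanSpace ℂ α) (b : EuclideanSpace ℂ β) :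
    ‖eprod a b‖ ^ 2 = ‖a‖ ^ 2 * ‖b‖ ^ 2 := by
  have h := inner_eprod_eprod a a b b
  simp only [inner_self_eq_norm_sq_to_K] at h
  exact_mod_cast h

variable {ι : Type*} [Fintype ι] {ψ₁ : ι → EuclideanSpace ℂ α} {ψ₂ : ι → EuclideanSpace ℂ β}

theorem sum_sq_norm_inner_mul_sq_norm_inner_of_orthonormal_eprod
    (hB : Orthonormal ℂ (fun i ↦ eprod (ψ₁ i) (ψ₂ i)))
    (hcard : Fintype.card ι = Fintype.card α * Fintype.card β)
    (μ : EuclideanSpace ℂ α) (ν : EuclideanSpace ℂ β) :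
    ∑ i, ‖⟪ψ₁ i, μ⟫‖ ^ 2 * ‖⟪ψ₂ i, ν⟫‖ ^ 2 = ‖μ‖ ^ 2 * ‖ν‖ ^ 2 := by
  rw [← norm_eprod_sq, ← hB.sum_sq_norm_inner_right_of_card_eq_finrank (by simp [hcard])]
  simp only [inner_eprod_eprod, norm_mul, mul_pow]

theorem sum_sq_norm_inner_left_factor_of_orthonormal_eprod
    (hB : Orthonormal ℂ (fun i ↦ eprod (ψ₁ i) (ψ₂ i)))
    (hcard : Fintype.card ι = Fintype.card α * Fintype.card β)
    (hψ₂ : ∀ i, ‖ψ₂ i‖ = 1) (μ : EuclideanSpace ℂ α) :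
    ∑ i, ‖⟪ψ₁ i, μ⟫‖ ^ 2 = Fintype.card β * ‖μ‖ ^ 2 := by
  classical
  let e := EuclideanSpace.basisFun β ℂ
  calc ∑ i, ‖⟪ψ₁ i, μ⟫‖ ^ 2
      = ∑ i, ‖⟪ψ₁ i, μ⟫‖ ^ 2 * ∑ j, ‖⟪ψ₂ i, e j⟫‖ ^ 2 := by
        simp only [e.sum_sq_norm_inner_left, hψ₂, one_pow, mul_one]
    _ = ∑ j, ∑ i, ‖⟪ψ₁ i, μ⟫‖ ^ 2 * ‖⟪ψ₂ i, e j⟫‖ ^ 2 := by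
        simp only [mul_sum]
        exact sum_comm
    _ = Fintype.card β * ‖μ‖ ^ 2 := by
        simp [sum_sq_norm_inner_mul_sq_norm_inner_of_orthonormal_eprod hB hcard, e.norm_eq_one]

theorem sum_sq_norm_inner_right_factor_of_orthonormal_eprod
    (hB : Orthonormal ℂ (fun i ↦ eprod (ψ₁ i) (ψ₂ i)))
    (hcard : Fintype.card ι = Fintype.card α * Fintype.card β)
    (hψ₁ : ∀ i, ‖ψ₁ i‖ = 1) (ν : EuclideanSpace ℂ β) :
    ∑ i, ‖⟪ψ₂ i, ν⟫‖ ^ 2 = Fintype.card α * ‖ν‖ ^ 2 := by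
  classical
  let e := EuclideanSpace.basisFun α ℂ
  calc ∑ i, ‖⟪ψ₂ i, ν⟫‖ ^ 2
      = ∑ i, (∑ j, ‖⟪ψ₁ i, e j⟫‖ ^ 2) * ‖⟪ψ₂ i, ν⟫‖ ^ 2 := by
        simp only [e.sum_sq_norm_inner_left, hψ₁, one_pow, one_mul]
    _ = ∑ j, ∑ i, ‖⟪ψ₁ i, e j⟫‖ ^ 2 * ‖⟪ψ₂ i, ν⟫‖ ^ 2 := by
        simp only [sum_mul]
        exact sum_comm
    _ = Fintype.card α * ‖ν‖ ^ 2 := by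
        simp [sum_sq_norm_inner_mul_sq_norm_inner_of_orthonormal_eprod hB hcard, e.norm_eq_one]

end eprod

theorem product_state_MU_product_basis_iff_general {d₁ d₂ : ℕ}
    (ψ₁ : Fin (d₁ * d₂) → EuclideanSpace ℂ (Fin d₁))
    (ψ₂ : Fin (d₁ * d₂) → EuclideanSpace ℂ (Fin d₂))
    (hψ₁ : ∀ i, ‖ψ₁ i‖ = 1) (hψ₂ : ∀ i, ‖ψ₂ i‖ = 1)
    (hB : Orthonormal ℂ (fun i => eprod (ψ₁ i) (ψ₂ i)))
    (μ₁ : EuclideanSpace ℂ (Fin d₁)) (μ₂ : EuclideanSpace ℂ (Fin d₂))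
    (hμ₁ : ‖μ₁‖ = 1) (hμ₂ : ‖μ₂‖ = 1) :
    (∀ i, ‖⟪eprod (ψ₁ i) (ψ₂ i), eprod μ₁ μ₂⟫‖ ^ 2 = 1 / ((d₁ * d₂ : ℕ) : ℝ)) ↔
      ((∀ i, ‖⟪ψ₁ i, μ₁⟫‖ ^ 2 = 1 / (d₁ : ℝ)) ∧
        (∀ i, ‖⟪ψ₂ i, μ₂⟫‖ ^ 2 = 1 / (d₂ : ℝ))) := by
  have hcard : Fintype.card (Fin (d₁ * d₂)) = Fintype.card (Fin d₁) * Fintype.card (Fin d₂) := by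
    simp
  have hx := sum_sq_norm_inner_left_factor_of_orthonormal_eprod hB hcard hψ₂ μ₁
  have hy := sum_sq_norm_inner_right_factor_of_orthonormal_eprod hB hcard hψ₁ μ₂
  simp only [inner_eprod_eprod, norm_mul, mul_pow]
  constructor
  · intro h
    have hab : ∀ i, (d₁ * ‖⟪ψ₁ i, μ₁⟫‖ ^ 2) * (d₂ * ‖⟪ψ₂ i, μ₂⟫‖ ^ 2) = 1 := fun i ↦ by
      calc (d₁ * ‖⟪ψ₁ i, μ₁⟫‖ ^ 2) * (d₂ * ‖⟪ψ₂ i, μ₂⟫‖ ^ 2)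
          = ((d₁ * d₂ : ℕ) : ℝ) * (‖⟪ψ₁ i, μ₁⟫‖ ^ 2 * ‖⟪ψ₂ i, μ₂⟫‖ ^ 2) := by push_cast; ring
        _ = 1 := by rw [h i, mul_one_div_cancel (Nat.cast_ne_zero.2 i.pos.ne')]
    have hsum : ∑ i, (d₁ * ‖⟪ψ₁ i, μ₁⟫‖ ^ 2 + d₂ * ‖⟪ψ₂ i, μ₂⟫‖ ^ 2)
        ≤ 2 * Fintype.card (Fin (d₁ * d₂)) := by
      simp only [sum_add_distrib, ← mul_sum, hx, hy, hμ₁, hμ₂, Fintype.card_fin]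
      push_cast
      linarith
    have key := forall_eq_one_of_mul_eq_one_of_sum_add_le (fun _ ↦ by positivity) hab hsum
    exact ⟨fun i ↦ eq_one_div_of_mul_eq_one_right (key i).1,
      fun i ↦ eq_one_div_of_mul_eq_one_right (key i).2⟩
  · rintro ⟨h₁, h₂⟩ i
    rw [h₁ i, h₂ i, one_div_mul_one_div, Nat.cast_mul]

/-- A product state `μ¹ ⊗ μ²` is mutually unbiased to an orthonormal product basis
`{ψᵢ¹ ⊗ ψᵢ²}` of `ℂ^{d₁} ⊗ ℂ^{d₂}` if and only if `|⟨ψᵢ¹, μ¹⟩|² = 1/d₁` and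
`|⟨ψᵢ², μ²⟩|² = 1/d₂` for all `i`. -/
theorem product_state_MU_product_basis_iff {d₁ d₂ : ℕ} (hd₁ : 0 < d₁) (hd₂ : 0 < d₂)
    (ψ₁ : Fin (d₁ * d₂) → EuclideanSpace ℂ (Fin d₁))
    (ψ₂ : Fin (d₁ * d₂) → EuclideanSpace ℂ (Fin d₂))
    (hψ₁ : ∀ i, ‖ψ₁ i‖ = 1) (hψ₂ : ∀ i, ‖ψ₂ i‖ = 1)
    (hB : Orthonormal ℂ (fun i => eprod (ψ₁ i) (ψ₂ i)))
    (μ₁ : EuclideanSpace ℂ (Fin d₁)) (μ₂ : EuclideanSpace ℂ (Fin d₂))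
    (hμ₁ : ‖μ₁‖ = 1) (hμ₂ : ‖μ₂‖ = 1) :
    (∀ i, ‖⟪eprod (ψ₁ i) (ψ₂ i), eprod μ₁ μ₂⟫‖ ^ 2 = 1 / ((d₁ * d₂ : ℕ) : ℝ)) ↔
      ((∀ i, ‖⟪ψ₁ i, μ₁⟫‖ ^ 2 = 1 / (d₁ : ℝ)) ∧
        (∀ i, ‖⟪ψ₂ i, μ₂⟫‖ ^ 2 = 1 / (d₂ : ℝ))) :=
  product_state_MU_product_basis_iff_general ψ₁ ψ₂ hψ₁ hψ₂ hB μ₁ μ₂ hμ₁ hμ₂
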